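/- arXiv:1102.3608 — 2 statements merged into one kernel-verified Lean document; each statement's English description precedes it below -/
import Mathlib

section
/- Let n ≥ 3. For every z = (z₁, …, z_n) ∈ ℂⁿ with z ≠ 0, in the exterior algebra ⋀(ℂ^{2n}) one has ‖z‖² · (α ∧ α) ≠ 2 · (α ∧ β_z ∧ γ_z), where α = Σ_{k=1}^n e_{2k−1} ∧ e_{2k}, β_z = Σ_k conj(z_k)·e_{2k−1}, and γ_z = Σ_k z_k·e_{2k}, with e₁,…,e_{2n} the standard basis of ℂ^{2n}. -/
/-!
Pick `j` with `z j ≠ 0` and two further indices `p ≠ q`, and pull both sides back along the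
inclusion of the four coordinates `dz_p, dz̄_p, dz_q, dz̄_q`. There `α` becomes
`e₀e₁ + e₂e₃`, `β` and `γ` become `z̄_p e₀ + z̄_q e₂` and `z_p e₁ + z_q e₃`, and comparing the
coefficients of `e₀e₁e₂e₃` gives `2‖z‖² = 2(|z_p|² + |z_q|²)`, which `|z_j|² > 0` rules out.
-/

open ExteriorAlgebra

/-- The standard basis vectors `e₁, …, e_{2n}` of `ℂ^{2n}` viewed inside the exterior
algebra `⋀(ℂ^{2n})` (0-indexed). Here `e (2k)` represents `dz_{k+1}` and `e (2k+1)`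
represents `dz̄_{k+1}`. -/
noncomputable def e (n : ℕ) (i : Fin (2 * n)) : ExteriorAlgebra ℂ (Fin (2 * n) → ℂ) :=
  ExteriorAlgebra.ι ℂ (Pi.single i 1)

theorem Fin.exists_pair_ne_of_three_le {n : ℕ} (hn : 3 ≤ n) (j : Fin n) :
    ∃ p q : Fin n, p ≠ q ∧ p ≠ j ∧ q ≠ j := by
  have : 1 < (Finset.univ.erase j).card := by
    rw [Finset.card_erase_of_mem (Finset.mem_univ j), Finset.card_univ, Fintype.card_fin]
    omega
  obtain ⟨p, hp, q, hq, hpq⟩ := Finset.one_lt_card.mp this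
  exact ⟨p, q, hpq, Finset.ne_of_mem_erase hp, Finset.ne_of_mem_erase hq⟩

theorem sq_norm_add_sq_norm_lt_sum {ι E : Type*} [Fintype ι] [DecidableEq ι]
    [NormedAddCommGroup E] {z : ι → E} {p q j : ι} (hpq : p ≠ q) (hpj : p ≠ j) (hqj : q ≠ j)
    (hj : z j ≠ 0) :
    ‖z p‖ ^ 2 + ‖z q‖ ^ 2 < ∑ k, ‖z k‖ ^ 2 := by
  rw [← Finset.sum_pair (f := fun k => ‖z k‖ ^ 2) hpq]
  exact Finset.sum_lt_sum_of_subset (Finset.subset_univ _) (Finset.mem_univ j)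
    (by simp [hpj.symm, hqj.symm]) (by positivity) (fun _ _ _ => by positivity)

namespace ExteriorAlgebra

variable {R : Type*} [CommRing R] {m : ℕ}

noncomputable def topCoeff (R : Type*) [CommRing R] (m : ℕ) :
    ExteriorAlgebra R (Fin m → R) →ₗ[R] R :=
  liftAlternating (Pi.single m Matrix.detRowAlternating)

theorem topCoeff_ιMulti (v : Fin m → Fin m → R) :
    topCoeff R m (ιMulti R m v) = (Matrix.of v).det := by
  rw [topCoeff, liftAlternating_apply_ιMulti, Pi.single_eq_same]
  rfl

theorem topCoeff_ι_mul_ι_mul_ι_mul_ι (u₀ u₁ u₂ u₃ : Fin 4 → R) :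
    topCoeff R 4 (ι R u₀ * (ι R u₁ * (ι R u₂ * ι R u₃))) =
      (Matrix.of ![u₀, u₁, u₂, u₃]).det := by
  rw [← topCoeff_ιMulti]
  simp [ιMulti_apply]

local notation "E" => fun (s : Fin 4) => (Pi.single s 1 : Fin 4 → R)

theorem topCoeff_symplectic_mul_self :
    topCoeff R 4 ((ι R (E 0) * ι R (E 1) + ι R (E 2) * ι R (E 3)) *
      (ι R (E 0) * ι R (E 1) + ι R (E 2) * ι R (E 3))) = 2 := by
  simp only [add_mul, mul_add, mul_assoc, map_add, topCoeff_ι_mul_ι_mul_ι_mul_ι]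
  simp [Matrix.det_succ_row_zero, Fin.sum_univ_succ, Fin.succAbove, one_add_one_eq_two]

theorem topCoeff_symplectic_mul_ι_mul_ι (s₀ s₂ t₁ t₃ : R) :
    topCoeff R 4 ((ι R (E 0) * ι R (E 1) + ι R (E 2) * ι R (E 3)) *
      ι R (s₀ • E 0 + s₂ • E 2) * ι R (t₁ • E 1 + t₃ • E 3)) = s₀ * t₁ + s₂ * t₃ := by
  rw [add_mul, add_mul, map_add]
  simp only [mul_assoc, topCoeff_ι_mul_ι_mul_ι_mul_ι]
  rw [add_comm (s₀ * t₁)]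
  simp [Matrix.det_succ_row_zero, Fin.sum_univ_succ, Fin.succAbove]

end ExteriorAlgebra

namespace Hopf

variable {n : ℕ} {p q : Fin n}

def pairIndex (p q : Fin n) : Fin 4 → Fin (2 * n) :=
  ![⟨2 * p, by omega⟩, ⟨2 * p + 1, by omega⟩, ⟨2 * q, by omega⟩, ⟨2 * q + 1, by omega⟩]

noncomputable def pairRestrict (p q : Fin n) :
    ExteriorAlgebra ℂ (Fin (2 * n) → ℂ) →ₐ[ℂ] ExteriorAlgebra ℂ (Fin 4 → ℂ) :=
  map (LinearMap.funLeft ℂ ℂ (pairIndex p q))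

theorem pairRestrict_e (a : Fin (2 * n)) :
    pairRestrict p q (e n a) = ι ℂ (Pi.single a 1 ∘ pairIndex p q) :=
  map_apply_ι _ _

theorem single_comp_pairIndex_even (hpq : p ≠ q) (k : Fin n) (h : 2 * (k : ℕ) < 2 * n) :
    (Pi.single ⟨2 * k, h⟩ 1 : Fin (2 * n) → ℂ) ∘ pairIndex p q =
      if k = p then (Pi.single 0 1 : Fin 4 → ℂ) else if k = q then Pi.single 2 1 else 0 := by
  have hpq' : (p : ℕ) ≠ q := Fin.val_ne_of_ne hpq
  funext s
  fin_cases s <;> split_ifs <;> subst_vars <;>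
    simp [pairIndex, Pi.single_apply, Fin.ext_iff] <;> omega

theorem single_comp_pairIndex_odd (hpq : p ≠ q) (k : Fin n) (h : 2 * (k : ℕ) + 1 < 2 * n) :
    (Pi.single ⟨2 * k + 1, h⟩ 1 : Fin (2 * n) → ℂ) ∘ pairIndex p q =
      if k = p then (Pi.single 1 1 : Fin 4 → ℂ) else if k = q then Pi.single 3 1 else 0 := by
  have hpq' : (p : ℕ) ≠ q := Fin.val_ne_of_ne hpq
  funext s
  fin_cases s <;> split_ifs <;> subst_vars <;>
    simp [pairIndex, Pi.single_apply, Fin.ext_iff] <;> omega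

theorem pairRestrict_sum_even (hpq : p ≠ q) (w : Fin n → ℂ) :
    pairRestrict p q (∑ k : Fin n, w k • e n ⟨2 * k, by omega⟩) =
      ι ℂ (w p • Pi.single 0 1 + w q • Pi.single 2 1) := by
  simp only [map_sum, map_smul, pairRestrict_e, single_comp_pairIndex_even hpq]
  rw [Fintype.sum_eq_add p q hpq (fun k hk => by simp [hk.1, hk.2])]
  simp [hpq.symm]

theorem pairRestrict_sum_odd (hpq : p ≠ q) (w : Fin n → ℂ) :
    pairRestrict p q (∑ k : Fin n, w k • e n ⟨2 * k + 1, by omega⟩) =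
      ι ℂ (w p • Pi.single 1 1 + w q • Pi.single 3 1) := by
  simp only [map_sum, map_smul, pairRestrict_e, single_comp_pairIndex_odd hpq]
  rw [Fintype.sum_eq_add p q hpq (fun k hk => by simp [hk.1, hk.2])]
  simp [hpq.symm]

theorem pairRestrict_symplectic (hpq : p ≠ q) :
    pairRestrict p q (∑ k : Fin n, e n ⟨2 * k, by omega⟩ * e n ⟨2 * k + 1, by omega⟩) =
      ι ℂ (Pi.single 0 1) * ι ℂ (Pi.single 1 1) + ι ℂ (Pi.single 2 1) * ι ℂ (Pi.single 3 1) := by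
  simp only [map_sum, map_mul, pairRestrict_e, single_comp_pairIndex_even hpq,
    single_comp_pairIndex_odd hpq]
  rw [Fintype.sum_eq_add p q hpq (fun k hk => by simp [hk.1, hk.2])]
  simp [hpq.symm]

end Hopf

open Hopf

/-- For `n ≥ 3` and every `z ∈ ℂⁿ` with `z ≠ 0`, in `⋀(ℂ^{2n})` one has
`‖z‖² · (α ∧ α) ≠ 2 · (α ∧ β_z ∧ γ_z)`, where `α = Σ_k e_{2k−1} ∧ e_{2k}`,
`β_z = Σ_k conj(z_k) · e_{2k−1}` and `γ_z = Σ_k z_k · e_{2k}`.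
(This is the algebraic content of Lemma 3: the standard metric form on a Hopf
manifold of dimension `≥ 3` is not pluriclosed.) -/
theorem hopf_not_pluriclosed (n : ℕ) (hn : 3 ≤ n) (z : Fin n → ℂ) (hz : z ≠ 0) :
    ((∑ k : Fin n, ‖z k‖ ^ 2 : ℝ) : ℂ) •
        ((∑ k : Fin n, e n ⟨2 * k, by have := k.isLt; omega⟩
            * e n ⟨2 * k + 1, by have := k.isLt; omega⟩) *
         (∑ k : Fin n, e n ⟨2 * k, by have := k.isLt; omega⟩
            * e n ⟨2 * k + 1, by have := k.isLt; omega⟩))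
      ≠ (2 : ℂ) •
        ((∑ k : Fin n, e n ⟨2 * k, by have := k.isLt; omega⟩
            * e n ⟨2 * k + 1, by have := k.isLt; omega⟩)
          * (∑ k : Fin n, (starRingEnd ℂ (z k)) • e n ⟨2 * k, by have := k.isLt; omega⟩)
          * (∑ k : Fin n, (z k) • e n ⟨2 * k + 1, by have := k.isLt; omega⟩)) := by
  intro h
  obtain ⟨j, hj⟩ := Function.ne_iff.mp hz
  obtain ⟨p, q, hpq, hpj, hqj⟩ := Fin.exists_pair_ne_of_three_le hn j
  have key := congrArg (fun x => topCoeff ℂ 4 (pairRestrict p q x)) h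
  simp only [map_smul, map_mul, pairRestrict_symplectic hpq, pairRestrict_sum_even hpq,
    pairRestrict_sum_odd hpq, topCoeff_symplectic_mul_self, topCoeff_symplectic_mul_ι_mul_ι,
    smul_eq_mul, Complex.conj_mul'] at key
  have hsum : ((∑ k, ‖z k‖ ^ 2 : ℝ) : ℂ) = ((‖z p‖ ^ 2 + ‖z q‖ ^ 2 : ℝ) : ℂ) := by
    push_cast at key ⊢
    linear_combination key / 2
  exact (sq_norm_add_sq_norm_lt_sum hpq hpj hqj hj).ne' (Complex.ofReal_injective hsum)
end

section
/- Let 0 < r < 1 and let t11, t12, t21, t22 : ℂ² → ℂ be twice continuously differentiable on an open neighborhood of the closed set cl(𝔻) × cl(D(0,r)) (where 𝔻 is the open unit disc in ℂ), satisfying the identity ∂²t22/∂z₁∂z̄₁ + ∂²t11/∂z₂∂z̄₂ − ∂²t12/∂z₂∂z̄₁ − ∂²t21/∂z₁∂z̄₂ = 0 on that neighborhood, where ∂/∂z_j and ∂/∂z̄_j denote Wirtinger derivatives. Define a : 𝔻 → ℂ by a(z₁) = ∫_{D(0,r)} t22(z₁, w) dλ(w), with λ the Lebesgue measure on ℂ.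 Then a is twice continuously differentiable on 𝔻 and for every z₁ ∈ 𝔻: ∂²a/∂z₁∂z̄₁ (z₁) = (i/2)·[ ∮_{|w|=r} (∂t12/∂z̄₁)(z₁, w) dw̄ − ∮_{|w|=r} (∂t21/∂z₁)(z₁, w) dw + ∮_{|w|=r} (∂t11/∂w)(z₁, w) dw ], where for a continuous function g on the circle |w| = r the contour integrals are ∮_{|w|=r} g(w) dw := ∫₀^{2π} g(r e^{iθ}) · i r e^{iθ} dθ and ∮_{|w|=r} g(w) dw̄ := ∫₀^{2π} g(r e^{iθ}) · (−i) r e^{−iθ} dθ. -/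
open MeasureTheory Complex

/-- Wirtinger derivative `∂f/∂z` of a function of one complex variable:
`(1/2)(∂f/∂x − i ∂f/∂y)`, expressed via real directional derivatives. -/
noncomputable def wirtD (f : ℂ → ℂ) (p : ℂ) : ℂ :=
  (1 / 2) * (lineDeriv ℝ f p 1 - Complex.I * lineDeriv ℝ f p Complex.I)

/-- Conjugate Wirtinger derivative `∂f/∂z̄` of a function of one complex variable:
`(1/2)(∂f/∂x + i ∂f/∂y)`. -/
noncomputable def wirtDBar (f : ℂ → ℂ) (p : ℂ) : ℂ :=
  (1 / 2) * (lineDeriv ℝ f p 1 + Complex.I * lineDeriv ℝ f p Complex.I)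

/-- Wirtinger derivative `∂f/∂z₁` in the first variable. -/
noncomputable def wirtD1 (f : ℂ × ℂ → ℂ) (p : ℂ × ℂ) : ℂ :=
  wirtD (fun w => f (w, p.2)) p.1

/-- Conjugate Wirtinger derivative `∂f/∂z̄₁` in the first variable. -/
noncomputable def wirtDBar1 (f : ℂ × ℂ → ℂ) (p : ℂ × ℂ) : ℂ :=
  wirtDBar (fun w => f (w, p.2)) p.1

/-- Wirtinger derivative `∂f/∂z₂` in the second variable. -/
noncomputable def wirtD2 (f : ℂ × ℂ → ℂ) (p : ℂ × ℂ) : ℂ :=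
  wirtD (fun w => f (p.1, w)) p.2

/-- Conjugate Wirtinger derivative `∂f/∂z̄₂` in the second variable. -/
noncomputable def wirtDBar2 (f : ℂ × ℂ → ℂ) (p : ℂ × ℂ) : ℂ :=
  wirtDBar (fun w => f (p.1, w)) p.2

/-- Contour integral `∮_{|w|=r} g(w) dw = ∫₀^{2π} g(r e^{iθ}) · i r e^{iθ} dθ`. -/
noncomputable def contourDw (r : ℝ) (g : ℂ → ℂ) : ℂ :=
  ∫ θ in (0:ℝ)..(2 * Real.pi),
    g (r * Complex.exp (Complex.I * θ)) * (Complex.I * r * Complex.exp (Complex.I * θ))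

/-- Contour integral `∮_{|w|=r} g(w) dw̄ = ∫₀^{2π} g(r e^{iθ}) · (−i) r e^{−iθ} dθ`. -/
noncomputable def contourDwBar (r : ℝ) (g : ℂ → ℂ) : ℂ :=
  ∫ θ in (0:ℝ)..(2 * Real.pi),
    g (r * Complex.exp (Complex.I * θ)) * (-Complex.I * r * Complex.exp (-(Complex.I * θ)))


open Metric Set Filter Topology
open scoped Real ComplexConjugate

/-!
Differentiating twice under the integral sign shows that `a` is `C²` and that
`∂²a/∂z₁∂z̄₁ (z₁) = ∫_{D(0,r)} ∂²t22/∂z₁∂z̄₁ (z₁, w) dλ(w)`. By the differential equation and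
the symmetry of second derivatives, the integrand equals
`∂_w(∂t12/∂z̄₁) + ∂̄_w(∂t21/∂z₁) − ∂̄_w(∂t11/∂w)`, a sum of first-order derivatives in `w`.
Stokes' theorem on the disc, `∫_D ∂̄g = −(i/2) ∮ g dw` and its complex conjugate
`∫_D ∂g = (i/2) ∮ g dw̄`, turns these into the three boundary integrals. Stokes' theorem itself
follows from Green's theorem on the rectangle `[0, r] × [−π, π]` in polar coordinates.
-/

section Wirtinger

variable {f g : ℂ → ℂ} {L : ℂ →L[ℝ] ℂ} {x : ℂ} {V : Set ℂ}

lemma wirtD_congr (h : f =ᶠ[𝓝 x] g) : wirtD f x = wirtD g x := by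
  simp only [wirtD, h.lineDeriv_eq]

lemma HasFDerivAt.wirtD_eq (h : HasFDerivAt f L x) :
    wirtD f x = (1 / 2) * (L 1 - I * L I) := by
  rw [wirtD, (h.hasLineDerivAt 1).lineDeriv, (h.hasLineDerivAt I).lineDeriv]

lemma HasFDerivAt.wirtDBar_eq (h : HasFDerivAt f L x) :
    wirtDBar f x = (1 / 2) * (L 1 + I * L I) := by
  rw [wirtDBar, (h.hasLineDerivAt 1).lineDeriv, (h.hasLineDerivAt I).lineDeriv]

lemma ContinuousLinearMap.apply_eq_wirtinger (L : ℂ →L[ℝ] ℂ) (z : ℂ) :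
    L z = z * ((1 / 2) * (L 1 - I * L I)) + conj z * ((1 / 2) * (L 1 + I * L I)) := by
  have hz : L z = z.re * L 1 + z.im * L I := by
    rw [← real_smul, ← real_smul, ← map_smul, ← map_smul, ← map_add]
    congr 1
    apply Complex.ext <;> simp
  rw [hz]
  conv_rhs => rw [← re_add_im z]
  simp only [map_add, map_mul, conj_ofReal, conj_I]
  linear_combination z.im * L I * I_sq

lemma wirtD_eq_conj_wirtDBar_conj (h : DifferentiableAt ℝ f x) :
    wirtD f x = conj (wirtDBar (conj ∘ f) x) := by
  have hf : HasFDerivAt f (fderiv ℝ f x) x := h.hasFDerivAt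
  have hc : HasFDerivAt (conj ∘ f)
      ((conjCLE : ℂ ≃L[ℝ] ℂ).toContinuousLinearMap ∘L fderiv ℝ f x) x :=
    (conjCLE : ℂ ≃L[ℝ] ℂ).toContinuousLinearMap.hasFDerivAt.comp x hf
  rw [hf.wirtD_eq, hc.wirtDBar_eq]
  simp only [ContinuousLinearMap.comp_apply, ContinuousLinearEquiv.coe_coe,
    ContinuousAlgEquiv.coeCLE_apply, conjCAE_apply, map_mul, map_add, map_div₀, map_one,
    map_ofNat, conj_conj, conj_I]
  ring

lemma ContDiffOn.continuousOn_wirtD (hV : IsOpen V) (hf : ContDiffOn ℝ 1 f V) :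
    ContinuousOn (wirtD f) V := by
  have hDg := hf.continuousOn_fderiv_of_isOpen hV le_rfl
  refine ContinuousOn.congr (f := fun w => (1 / 2) * (fderiv ℝ f w 1 - I * fderiv ℝ f w I)) ?_
    fun w hw => ((hf.differentiableOn one_ne_zero).hasFDerivAt (hV.mem_nhds hw)).wirtD_eq
  exact continuousOn_const.mul ((hDg.clm_apply continuousOn_const).sub
    (continuousOn_const.mul (hDg.clm_apply continuousOn_const)))

lemma ContDiffOn.continuousOn_wirtDBar (hV : IsOpen V) (hf : ContDiffOn ℝ 1 f V) :
    ContinuousOn (wirtDBar f) V := by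
  have hDg := hf.continuousOn_fderiv_of_isOpen hV le_rfl
  refine ContinuousOn.congr (f := fun w => (1 / 2) * (fderiv ℝ f w 1 + I * fderiv ℝ f w I)) ?_
    fun w hw => ((hf.differentiableOn one_ne_zero).hasFDerivAt (hV.mem_nhds hw)).wirtDBar_eq
  exact continuousOn_const.mul ((hDg.clm_apply continuousOn_const).add
    (continuousOn_const.mul (hDg.clm_apply continuousOn_const)))

end Wirtinger

section PartialWirtinger

variable {F t W : ℂ × ℂ → ℂ} {L : ℂ × ℂ →L[ℝ] ℂ} {p q : ℂ × ℂ} {U : Set (ℂ × ℂ)}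

lemma HasFDerivAt.wirtD1_eq (h : HasFDerivAt F L p) :
    wirtD1 F p = (1 / 2) * (L (1, 0) - I * L (I, 0)) := by
  simpa [wirtD1, Function.comp_def] using
    (h.comp p.1 (hasFDerivAt_prodMk_left p.1 p.2)).wirtD_eq

lemma HasFDerivAt.wirtDBar1_eq (h : HasFDerivAt F L p) :
    wirtDBar1 F p = (1 / 2) * (L (1, 0) + I * L (I, 0)) := by
  simpa [wirtDBar1, Function.comp_def] using
    (h.comp p.1 (hasFDerivAt_prodMk_left p.1 p.2)).wirtDBar_eq

lemma HasFDerivAt.wirtD2_eq (h : HasFDerivAt F L p) :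
    wirtD2 F p = (1 / 2) * (L (0, 1) - I * L (0, I)) := by
  simpa [wirtD2, Function.comp_def] using
    (h.comp p.2 (hasFDerivAt_prodMk_right p.1 p.2)).wirtD_eq

lemma HasFDerivAt.wirtDBar2_eq (h : HasFDerivAt F L p) :
    wirtDBar2 F p = (1 / 2) * (L (0, 1) + I * L (0, I)) := by
  simpa [wirtDBar2, Function.comp_def] using
    (h.comp p.2 (hasFDerivAt_prodMk_right p.1 p.2)).wirtDBar_eq

-- `+ -I *` rather than `- I *`: the shape `½ (Dt u + c Dt v)` of `of_eqOn_fderiv_comb` below.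
lemma eqOn_wirtD1 (hU : IsOpen U) (ht : DifferentiableOn ℝ t U) :
    EqOn (wirtD1 t) (fun p => (1 / 2) * (fderiv ℝ t p (1, 0) + -I * fderiv ℝ t p (I, 0))) U :=
  fun _ hp => by
    rw [(ht.hasFDerivAt (hU.mem_nhds hp)).wirtD1_eq]
    ring

lemma eqOn_wirtDBar1 (hU : IsOpen U) (ht : DifferentiableOn ℝ t U) :
    EqOn (wirtDBar1 t) (fun p => (1 / 2) * (fderiv ℝ t p (1, 0) + I * fderiv ℝ t p (I, 0))) U :=
  fun _ hp => (ht.hasFDerivAt (hU.mem_nhds hp)).wirtDBar1_eq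

lemma eqOn_wirtD2 (hU : IsOpen U) (ht : DifferentiableOn ℝ t U) :
    EqOn (wirtD2 t) (fun p => (1 / 2) * (fderiv ℝ t p (0, 1) + -I * fderiv ℝ t p (0, I))) U :=
  fun _ hp => by
    rw [(ht.hasFDerivAt (hU.mem_nhds hp)).wirtD2_eq]
    ring

lemma eqOn_wirtDBar2 (hU : IsOpen U) (ht : DifferentiableOn ℝ t U) :
    EqOn (wirtDBar2 t) (fun p => (1 / 2) * (fderiv ℝ t p (0, 1) + I * fderiv ℝ t p (0, I))) U :=
  fun _ hp => (ht.hasFDerivAt (hU.mem_nhds hp)).wirtDBar2_eq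

section FirstOrderCombination

variable {u v : ℂ × ℂ} {c : ℂ}

lemma ContDiffOn.of_eqOn_fderiv_comb
    (hW : EqOn W (fun p => (1 / 2) * (fderiv ℝ t p u + c * fderiv ℝ t p v)) U)
    (hU : IsOpen U) (ht : ContDiffOn ℝ 2 t U) :
    ContDiffOn ℝ 1 W U := by
  have hDt : ContDiffOn ℝ 1 (fderiv ℝ t) U := ht.fderiv_of_isOpen hU (by norm_num)
  refine ContDiffOn.congr ?_ hW
  exact contDiffOn_const.mul
    ((hDt.clm_apply contDiffOn_const).add (contDiffOn_const.mul (hDt.clm_apply contDiffOn_const)))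

lemma HasFDerivAt.of_eqOn_fderiv_comb
    (hW : EqOn W (fun p => (1 / 2) * (fderiv ℝ t p u + c * fderiv ℝ t p v)) U)
    (hU : IsOpen U) (ht : ContDiffOn ℝ 2 t U) (hq : q ∈ U) :
    HasFDerivAt W ((1 / 2 : ℂ) • ((fderiv ℝ (fderiv ℝ t) q).flip u
      + c • (fderiv ℝ (fderiv ℝ t) q).flip v)) q := by
  have hDt : HasFDerivAt (fderiv ℝ t) (fderiv ℝ (fderiv ℝ t) q) q :=
    ((ht.fderiv_of_isOpen hU (by norm_num) : ContDiffOn ℝ 1 _ U).differentiableOn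
      one_ne_zero).hasFDerivAt (hU.mem_nhds hq)
  have hu := hDt.clm_apply (hasFDerivAt_const u q)
  have hv := hDt.clm_apply (hasFDerivAt_const v q)
  simp only [ContinuousLinearMap.comp_zero, zero_add] at hu hv
  exact ((hu.add (hv.const_mul c)).const_mul (1 / 2 : ℂ)).congr_of_eventuallyEq
    (hW.eventuallyEq_of_mem (hU.mem_nhds hq))

end FirstOrderCombination

lemma ContDiffOn.wirtD1 (ht : ContDiffOn ℝ 2 t U) (hU : IsOpen U) : ContDiffOn ℝ 1 (wirtD1 t) U :=
  .of_eqOn_fderiv_comb (eqOn_wirtD1 hU (ht.differentiableOn two_ne_zero)) hU ht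

lemma ContDiffOn.wirtDBar1 (ht : ContDiffOn ℝ 2 t U) (hU : IsOpen U) :
    ContDiffOn ℝ 1 (wirtDBar1 t) U :=
  .of_eqOn_fderiv_comb (eqOn_wirtDBar1 hU (ht.differentiableOn two_ne_zero)) hU ht

lemma ContDiffOn.wirtD2 (ht : ContDiffOn ℝ 2 t U) (hU : IsOpen U) : ContDiffOn ℝ 1 (wirtD2 t) U :=
  .of_eqOn_fderiv_comb (eqOn_wirtD2 hU (ht.differentiableOn two_ne_zero)) hU ht

lemma wirtD1_wirtDBar2_comm (hU : IsOpen U) (ht : ContDiffOn ℝ 2 t U) (hq : q ∈ U) :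
    wirtD1 (wirtDBar2 t) q = wirtDBar2 (wirtD1 t) q := by
  have ht1 := ht.differentiableOn two_ne_zero
  have hsymm := (ht.contDiffAt (hU.mem_nhds hq)).isSymmSndFDerivAt (by simp)
  rw [(HasFDerivAt.of_eqOn_fderiv_comb (eqOn_wirtDBar2 hU ht1) hU ht hq).wirtD1_eq,
    (HasFDerivAt.of_eqOn_fderiv_comb (eqOn_wirtD1 hU ht1) hU ht hq).wirtDBar2_eq]
  simp only [smul_apply, add_apply, ContinuousLinearMap.flip_apply, smul_eq_mul]
  rw [hsymm (1, 0) (0, 1), hsymm (1, 0) (0, I), hsymm (I, 0) (0, 1), hsymm (I, 0) (0, I)]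
  ring

lemma wirtD2_wirtDBar2_comm (hU : IsOpen U) (ht : ContDiffOn ℝ 2 t U) (hq : q ∈ U) :
    wirtD2 (wirtDBar2 t) q = wirtDBar2 (wirtD2 t) q := by
  have ht1 := ht.differentiableOn two_ne_zero
  have hsymm := (ht.contDiffAt (hU.mem_nhds hq)).isSymmSndFDerivAt (by simp)
  rw [(HasFDerivAt.of_eqOn_fderiv_comb (eqOn_wirtDBar2 hU ht1) hU ht hq).wirtD2_eq,
    (HasFDerivAt.of_eqOn_fderiv_comb (eqOn_wirtD2 hU ht1) hU ht hq).wirtDBar2_eq]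
  simp only [smul_apply, add_apply, ContinuousLinearMap.flip_apply, smul_eq_mul]
  rw [hsymm (0, 1) (0, I)]
  ring

end PartialWirtinger

section FibreIntegral

variable {E : Type*} [NormedAddCommGroup E] {U : Set (ℂ × ℂ)} {Ω : Set ℂ} {r : ℝ} {z : ℂ}

lemma ContinuousOn.integrableOn_ball {H : ℂ → E} (hH : ContinuousOn H (closedBall (0 : ℂ) r)) :
    IntegrableOn H (ball (0 : ℂ) r) :=
  (hH.integrableOn_compact (isCompact_closedBall _ _)).mono_set ball_subset_closedBall

lemma ContinuousOn.slice_snd {H : ℂ × ℂ → E} (hH : ContinuousOn H U) {s : Set ℂ}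
    (hs : ∀ w ∈ s, (z, w) ∈ U) : ContinuousOn (fun w => H (z, w)) s :=
  hH.comp (Continuous.continuousOn (by fun_prop)) hs

variable [NormedSpace ℝ E]

lemma exists_closedBall_prod_subset (hΩ : IsOpen Ω) (hΩU : Ω ×ˢ closedBall (0 : ℂ) r ⊆ U)
    (hz : z ∈ Ω) : ∃ ε > 0, closedBall z ε ×ˢ closedBall (0 : ℂ) r ⊆ U := by
  obtain ⟨ε, hε, hεΩ⟩ := nhds_basis_closedBall.mem_iff.1 (hΩ.mem_nhds hz)
  exact ⟨ε, hε, (prod_mono hεΩ subset_rfl).trans hΩU⟩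

lemma continuousAt_integral_ball {H : ℂ × ℂ → E} (hΩ : IsOpen Ω) (hU : IsOpen U)
    (hΩU : Ω ×ˢ closedBall (0 : ℂ) r ⊆ U) (hH : ContinuousOn H U) (hz : z ∈ Ω) :
    ContinuousAt (fun x => ∫ w in ball (0 : ℂ) r, H (x, w)) z := by
  obtain ⟨ε, hε, hK⟩ := exists_closedBall_prod_subset hΩ hΩU hz
  have hKU : ∀ x ∈ ball z ε, ∀ w ∈ ball (0 : ℂ) r, (x, w) ∈ U := fun x hx w hw =>
    hK ⟨ball_subset_closedBall hx, ball_subset_closedBall hw⟩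
  obtain ⟨M, hM⟩ := ((isCompact_closedBall z ε).prod (isCompact_closedBall 0 r))
    |>.exists_bound_of_continuousOn (hH.mono hK)
  have : IsFiniteMeasure (volume.restrict (ball (0 : ℂ) r)) :=
    isFiniteMeasure_restrict.2 measure_ball_lt_top.ne
  refine continuousAt_of_dominated (bound := fun _ => M) ?_ ?_ (integrable_const M) ?_
  · filter_upwards [ball_mem_nhds z hε] with x hx
    exact (hH.slice_snd (hKU x hx)).aestronglyMeasurable measurableSet_ball
  · filter_upwards [ball_mem_nhds z hε] with x hx
    filter_upwards [ae_restrict_mem measurableSet_ball] with w hw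
    exact hM _ ⟨ball_subset_closedBall hx, ball_subset_closedBall hw⟩
  · filter_upwards [ae_restrict_mem measurableSet_ball] with w hw
    exact (hH.continuousAt (hU.mem_nhds (hKU z (mem_ball_self hε) w hw))).comp
      (f := fun x : ℂ => (x, w)) (by fun_prop)

lemma hasFDerivAt_integral_ball {F : ℂ × ℂ → E} (hΩ : IsOpen Ω) (hU : IsOpen U)
    (hΩU : Ω ×ˢ closedBall (0 : ℂ) r ⊆ U) (hF : ContDiffOn ℝ 1 F U) (hz : z ∈ Ω) :
    HasFDerivAt (fun x => ∫ w in ball (0 : ℂ) r, F (x, w))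
      (∫ w in ball (0 : ℂ) r, fderiv ℝ F (z, w) ∘L .inl ℝ ℂ ℂ) z := by
  obtain ⟨ε, hε, hK⟩ := exists_closedBall_prod_subset hΩ hΩU hz
  have hKU : ∀ x ∈ ball z ε, ∀ w ∈ ball (0 : ℂ) r, (x, w) ∈ U := fun x hx w hw =>
    hK ⟨ball_subset_closedBall hx, ball_subset_closedBall hw⟩
  have hF' : ContinuousOn (fun q => fderiv ℝ F q ∘L .inl ℝ ℂ ℂ) U :=
    (hF.continuousOn_fderiv_of_isOpen hU le_rfl).clm_comp continuousOn_const
  obtain ⟨M, hM⟩ := ((isCompact_closedBall z ε).prod (isCompact_closedBall 0 r))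
    |>.exists_bound_of_continuousOn (hF'.mono hK)
  have : IsFiniteMeasure (volume.restrict (ball (0 : ℂ) r)) :=
    isFiniteMeasure_restrict.2 measure_ball_lt_top.ne
  refine hasFDerivAt_integral_of_dominated_of_fderiv_le (bound := fun _ => M)
    (F' := fun x w => fderiv ℝ F (x, w) ∘L .inl ℝ ℂ ℂ) (ball_mem_nhds z hε) ?_ ?_ ?_ ?_
    (integrable_const M) ?_
  · filter_upwards [ball_mem_nhds z hε] with x hx
    exact (hF.continuousOn.slice_snd (hKU x hx)).aestronglyMeasurable measurableSet_ball
  · exact (hF.continuousOn.slice_snd fun w hw => hK ⟨mem_closedBall_self hε.le, hw⟩)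
      |>.integrableOn_ball
  · exact (hF'.slice_snd (hKU z (mem_ball_self hε))).aestronglyMeasurable measurableSet_ball
  · filter_upwards [ae_restrict_mem measurableSet_ball] with w hw x hx
    exact hM _ ⟨ball_subset_closedBall hx, ball_subset_closedBall hw⟩
  · filter_upwards [ae_restrict_mem measurableSet_ball] with w hw x hx
    exact ((hF.differentiableOn one_ne_zero).hasFDerivAt (hU.mem_nhds (hKU x hx w hw))).comp x
      (hasFDerivAt_prodMk_left x w)

lemma contDiffOn_integral_ball (n : ℕ) {F : ℂ × ℂ → E} (hΩ : IsOpen Ω) (hU : IsOpen U)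
    (hΩU : Ω ×ˢ closedBall (0 : ℂ) r ⊆ U) (hF : ContDiffOn ℝ n F U) :
    ContDiffOn ℝ n (fun x => ∫ w in ball (0 : ℂ) r, F (x, w)) Ω := by
  induction n generalizing E with
  | zero =>
    simp only [CharP.cast_eq_zero, contDiffOn_zero] at hF ⊢
    exact fun z hz => (continuousAt_integral_ball hΩ hU hΩU hF hz).continuousWithinAt
  | succ n ih =>
    have hF1 : ContDiffOn ℝ 1 F U := hF.of_le (by exact_mod_cast n.succ_pos)
    have hDF : ContDiffOn ℝ n (fun q => fderiv ℝ F q ∘L .inl ℝ ℂ ℂ) U :=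
      (hF.fderiv_of_isOpen hU (by push_cast; rfl)).clm_comp contDiffOn_const
    rw [Nat.cast_succ, contDiffOn_succ_iff_fderiv_of_isOpen hΩ]
    refine ⟨fun z hz => (hasFDerivAt_integral_ball hΩ hU hΩU hF1 hz).differentiableAt
      |>.differentiableWithinAt, by simp, ?_⟩
    exact (ih hDF).congr fun z hz => (hasFDerivAt_integral_ball hΩ hU hΩU hF1 hz).fderiv

end FibreIntegral

section FibreWirtinger

variable {U : Set (ℂ × ℂ)} {Ω : Set ℂ} {r : ℝ} {z : ℂ} {F : ℂ × ℂ → ℂ}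

lemma integrableOn_fderiv_fst_ball (hU : IsOpen U) (hΩU : Ω ×ˢ closedBall (0 : ℂ) r ⊆ U)
    (hF : ContDiffOn ℝ 1 F U) (hz : z ∈ Ω) :
    IntegrableOn (fun w => fderiv ℝ F (z, w) ∘L .inl ℝ ℂ ℂ) (ball (0 : ℂ) r) := by
  have hDF : ContinuousOn (fun q => fderiv ℝ F q ∘L .inl ℝ ℂ ℂ) U :=
    (hF.continuousOn_fderiv_of_isOpen hU le_rfl).clm_comp continuousOn_const
  exact (hDF.slice_snd fun w hw => hΩU ⟨hz, hw⟩).integrableOn_ball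

lemma wirtD_integral_ball (hΩ : IsOpen Ω) (hU : IsOpen U)
    (hΩU : Ω ×ˢ closedBall (0 : ℂ) r ⊆ U) (hF : ContDiffOn ℝ 1 F U) (hz : z ∈ Ω) :
    wirtD (fun x => ∫ w in ball (0 : ℂ) r, F (x, w)) z
      = ∫ w in ball (0 : ℂ) r, wirtD1 F (z, w) := by
  let φ : (ℂ →L[ℝ] ℂ) →L[ℝ] ℂ := (1 / 2 : ℂ) • (.apply ℝ ℂ 1 - I • .apply ℝ ℂ I)
  calc _ = φ (∫ w in ball (0 : ℂ) r, fderiv ℝ F (z, w) ∘L .inl ℝ ℂ ℂ) := by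
        rw [(hasFDerivAt_integral_ball hΩ hU hΩU hF hz).wirtD_eq]; simp [φ]
    _ = ∫ w in ball (0 : ℂ) r, φ (fderiv ℝ F (z, w) ∘L .inl ℝ ℂ ℂ) :=
        (φ.integral_comp_comm (integrableOn_fderiv_fst_ball hU hΩU hF hz)).symm
    _ = _ := setIntegral_congr_fun measurableSet_ball fun w hw => by
        rw [((hF.differentiableOn one_ne_zero).hasFDerivAt
          (hU.mem_nhds (hΩU ⟨hz, ball_subset_closedBall hw⟩))).wirtD1_eq]
        simp [φ]

lemma wirtDBar_integral_ball (hΩ : IsOpen Ω) (hU : IsOpen U)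
    (hΩU : Ω ×ˢ closedBall (0 : ℂ) r ⊆ U) (hF : ContDiffOn ℝ 1 F U) (hz : z ∈ Ω) :
    wirtDBar (fun x => ∫ w in ball (0 : ℂ) r, F (x, w)) z
      = ∫ w in ball (0 : ℂ) r, wirtDBar1 F (z, w) := by
  let φ : (ℂ →L[ℝ] ℂ) →L[ℝ] ℂ := (1 / 2 : ℂ) • (.apply ℝ ℂ 1 + I • .apply ℝ ℂ I)
  calc _ = φ (∫ w in ball (0 : ℂ) r, fderiv ℝ F (z, w) ∘L .inl ℝ ℂ ℂ) := by
        rw [(hasFDerivAt_integral_ball hΩ hU hΩU hF hz).wirtDBar_eq]; simp [φ, mul_add]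
    _ = ∫ w in ball (0 : ℂ) r, φ (fderiv ℝ F (z, w) ∘L .inl ℝ ℂ ℂ) :=
        (φ.integral_comp_comm (integrableOn_fderiv_fst_ball hU hΩU hF hz)).symm
    _ = _ := setIntegral_congr_fun measurableSet_ball fun w hw => by
        rw [((hF.differentiableOn one_ne_zero).hasFDerivAt
          (hU.mem_nhds (hΩU ⟨hz, ball_subset_closedBall hw⟩))).wirtDBar1_eq]
        simp [φ, mul_add]

end FibreWirtinger

section Polar

lemma polarCoord_symm_eq_circleMap (p : ℝ × ℝ) :
    Complex.polarCoord.symm p = circleMap 0 p.1 p.2 := by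
  rw [Complex.polarCoord_symm_apply, circleMap_zero, exp_mul_I]
  push_cast
  ring

lemma setIntegral_ball_eq_polar {r : ℝ} (hr : 0 < r) {F : ℂ → ℂ}
    (hF : ContinuousOn F (closedBall (0 : ℂ) r)) :
    ∫ w in ball (0 : ℂ) r, F w = ∫ ρ in 0..r, ∫ θ in -π..π, ρ * F (circleMap 0 ρ θ) := by
  set G : ℝ × ℝ → ℂ := fun p => p.1 * F (circleMap 0 p.1 p.2)
  have hrect : Ioo 0 r ×ˢ Ioo (-π) π = polarCoord.target ∩ {p | p.1 < r} := by
    ext p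
    simp only [polarCoord_target, mem_inter_iff, mem_prod, mem_Ioi, mem_Ioo, mem_ofPred_eq]
    tauto
  have hG : IntegrableOn G (Ioo 0 r ×ˢ Ioo (-π) π) := by
    refine ContinuousOn.integrableOn_compact (isCompact_Icc.prod isCompact_Icc) ?_
      |>.mono_set (prod_mono Ioo_subset_Icc_self Ioo_subset_Icc_self)
    refine (Continuous.continuousOn (by fun_prop)).mul (hF.comp (by fun_prop) fun p hp => ?_)
    simpa [abs_of_nonneg hp.1.1] using hp.1.2
  have hpolar : ∀ p ∈ polarCoord.target,
      p.1 • (ball (0 : ℂ) r).indicator F (Complex.polarCoord.symm p)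
        = {p | p.1 < r}.indicator G p := by
    intro p hp
    have hp1 : 0 < p.1 := hp.1
    simp only [indicator, polarCoord_symm_eq_circleMap, mem_ball, dist_zero_right,
      norm_circleMap_zero, abs_of_pos hp1, mem_ofPred_eq, G, real_smul]
    split_ifs <;> simp
  calc ∫ w in ball (0 : ℂ) r, F w
      = ∫ p in polarCoord.target,
          p.1 • (ball (0 : ℂ) r).indicator F (Complex.polarCoord.symm p) := by
        rw [Complex.integral_comp_polarCoord_symm, integral_indicator measurableSet_ball]
    _ = ∫ p in Ioo 0 r ×ˢ Ioo (-π) π, G p := by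
        rw [setIntegral_congr_fun polarCoord.open_target.measurableSet hpolar,
          setIntegral_indicator (measurableSet_lt measurable_fst measurable_const), hrect]
    _ = _ := by
        rw [Measure.volume_eq_prod, setIntegral_prod _ (by rwa [← Measure.volume_eq_prod]),
          intervalIntegral.integral_of_le hr.le, integral_Ioc_eq_integral_Ioo]
        refine setIntegral_congr_fun measurableSet_Ioo fun ρ _ => ?_
        rw [intervalIntegral.integral_of_le (by linarith [Real.pi_pos]),
          integral_Ioc_eq_integral_Ioo]

end Polar

section Stokes

variable {E : Type*} [NormedAddCommGroup E] [NormedSpace ℝ E]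

lemma HasFDerivAt.apply_one_zero {f : ℝ × ℝ → E} {L : ℝ × ℝ →L[ℝ] E} {p : ℝ × ℝ}
    (hf : HasFDerivAt f L p) {f₁ : E} (h₁ : HasDerivAt (fun x => f (x, p.2)) f₁ p.1) :
    L (1, 0) = f₁ :=
  (hf.comp_hasDerivAt p.1 ((hasDerivAt_id p.1).prodMk (hasDerivAt_const p.1 p.2))).unique h₁

lemma HasFDerivAt.apply_zero_one {f : ℝ × ℝ → E} {L : ℝ × ℝ →L[ℝ] E} {p : ℝ × ℝ}
    (hf : HasFDerivAt f L p) {f₂ : E} (h₂ : HasDerivAt (fun y => f (p.1, y)) f₂ p.2) :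
    L (0, 1) = f₂ :=
  (hf.comp_hasDerivAt p.2 ((hasDerivAt_const p.2 p.1).prodMk (hasDerivAt_id p.2))).unique h₂

variable {g : ℂ → ℂ} {V : Set ℂ} {r ρ θ : ℝ} {L : ℂ →L[ℝ] ℂ}

-- In polar coordinates `g dw = P dρ + Q dθ` with `P = e^{iθ} g` and `Q = iρ e^{iθ} g`. Green's
-- theorem is applied to the field `(-iQ, iP)`, whose two components are the following functions.
noncomputable def polarRadialField (g : ℂ → ℂ) (p : ℝ × ℝ) : ℂ :=
  circleMap 0 p.1 p.2 * g (circleMap 0 p.1 p.2)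

noncomputable def polarAngularField (g : ℂ → ℂ) (p : ℝ × ℝ) : ℂ :=
  I * circleMap 0 1 p.2 * g (circleMap 0 p.1 p.2)

lemma hasDerivAt_circleMap_radius (θ ρ : ℝ) :
    HasDerivAt (fun ρ' => circleMap 0 ρ' θ) (circleMap 0 1 θ) ρ := by
  simpa [circleMap] using (hasDerivAt_id ρ).ofReal_comp.mul_const (exp (θ * I))

lemma differentiableAt_polarFields {p : ℝ × ℝ} (hg : DifferentiableAt ℝ g (circleMap 0 p.1 p.2)) :
    DifferentiableAt ℝ (polarRadialField g) p ∧ DifferentiableAt ℝ (polarAngularField g) p := by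
  have hc : DifferentiableAt ℝ (fun q : ℝ × ℝ => circleMap 0 q.1 q.2) p := by
    simp only [circleMap]; fun_prop
  have hgc := hg.comp p hc
  exact ⟨hc.mul hgc, ((differentiableAt_const _).mul (by simp only [circleMap]; fun_prop)).mul hgc⟩

lemma divergence_polarFields (hg : HasFDerivAt g L (circleMap 0 ρ θ)) :
    fderiv ℝ (polarRadialField g) (ρ, θ) (1, 0) + fderiv ℝ (polarAngularField g) (ρ, θ) (0, 1)
      = 2 * ρ * wirtDBar g (circleMap 0 ρ θ) := by
  obtain ⟨hf, hh⟩ := differentiableAt_polarFields (p := (ρ, θ)) hg.differentiableAt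
  have hρ := (hasDerivAt_circleMap_radius θ ρ).mul
    (hg.comp_hasDerivAt ρ (hasDerivAt_circleMap_radius θ ρ))
  have hθ := ((hasDerivAt_circleMap 0 1 θ).const_mul I).mul
    (hg.comp_hasDerivAt θ (hasDerivAt_circleMap 0 ρ θ))
  rw [hf.hasFDerivAt.apply_one_zero hρ, hh.hasFDerivAt.apply_zero_one hθ, hg.wirtDBar_eq]
  set e := circleMap 0 1 θ
  have he : e * conj e = 1 := by
    rw [Complex.mul_conj, normSq_eq_norm_sq, norm_circleMap_zero]; simp
  have hc : circleMap 0 ρ θ = ρ * e := by simp [e, circleMap]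
  rw [hc, L.apply_eq_wirtinger e, L.apply_eq_wirtinger (ρ * e * I)]
  simp only [Function.comp_apply, map_mul, conj_ofReal, conj_I]
  -- the `∂g`-terms cancel, leaving `2ρ e ē ∂̄g`
  linear_combination (ρ * (L 1 + I * L I)) * he + (e * g (circleMap 0 ρ θ)
    - ρ * e * conj e * (L 1 + I * L I) / 2 + ρ * e ^ 2 * (L 1 - I * L I) / 2) * I_sq

lemma periodic_polarRadialField (g : ℂ → ℂ) (ρ : ℝ) :
    Function.Periodic (fun θ => polarRadialField g (ρ, θ)) (2 * π) :=
  fun θ => by simp only [polarRadialField, periodic_circleMap 0 ρ θ]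

lemma periodic_polarAngularField (g : ℂ → ℂ) (ρ : ℝ) :
    Function.Periodic (fun θ => polarAngularField g (ρ, θ)) (2 * π) :=
  fun θ => by simp only [polarAngularField, periodic_circleMap 0 ρ θ, periodic_circleMap 0 1 θ]

lemma contourDw_eq_integral_polarRadialField (r : ℝ) (g : ℂ → ℂ) :
    contourDw r g = I * ∫ θ in -π..π, polarRadialField g (r, θ) := by
  have h := (periodic_polarRadialField g r).intervalIntegral_add_eq 0 (-π)
  rw [zero_add, show -π + 2 * π = π by ring] at h
  rw [← h, ← intervalIntegral.integral_const_mul, contourDw]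
  congr 1 with θ
  rw [polarRadialField, circleMap_zero, mul_comm (θ : ℂ) I]
  ring

lemma contourDwBar_eq_conj_contourDw_conj (r : ℝ) (g : ℂ → ℂ) :
    contourDwBar r g = conj (contourDw r (conj ∘ g)) := by
  rw [contourDwBar, contourDw, intervalIntegral.integral_of_le (by positivity),
    intervalIntegral.integral_of_le (by positivity), ← integral_conj]
  congr 1 with θ
  simp [← exp_conj]

theorem integral_ball_wirtDBar (hr : 0 < r) (hV : IsOpen V) (hrV : closedBall 0 r ⊆ V)
    (hg : ContDiffOn ℝ 1 g V) :
    ∫ w in ball (0 : ℂ) r, wirtDBar g w = -(I / 2) * contourDw r g := by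
  set R := uIcc 0 r ×ˢ uIcc (-π) π
  have hRV : ∀ p ∈ R, circleMap 0 p.1 p.2 ∈ V := fun p hp => hrV <| by
    have hp1 := hp.1
    rw [uIcc_of_le hr.le] at hp1
    simpa [abs_of_nonneg hp1.1] using hp1.2
  have hgR : ∀ p ∈ R, HasFDerivAt g (fderiv ℝ g (circleMap 0 p.1 p.2)) (circleMap 0 p.1 p.2) :=
    fun p hp => (hg.differentiableOn one_ne_zero).hasFDerivAt (hV.mem_nhds (hRV p hp))
  have hfieldsR := fun p hp => differentiableAt_polarFields (hgR p hp).differentiableAt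
  have hIoo : ∀ p ∈ Ioo (min 0 r) (max 0 r) ×ˢ Ioo (min (-π) π) (max (-π) π) \ ∅, p ∈ R :=
    fun p hp => prod_mono Ioo_subset_Icc_self Ioo_subset_Icc_self hp.1
  have hWc := hg.continuousOn_wirtDBar hV
  have hdivR : EqOn (fun p => 2 * p.1 * wirtDBar g (circleMap 0 p.1 p.2))
      (fun p => fderiv ℝ (polarRadialField g) p (1, 0)
        + fderiv ℝ (polarAngularField g) p (0, 1)) R :=
    fun p hp => (divergence_polarFields (hgR p hp)).symm
  have hint : IntegrableOn (fun p => fderiv ℝ (polarRadialField g) p (1, 0)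
      + fderiv ℝ (polarAngularField g) p (0, 1)) R := by
    refine (ContinuousOn.integrableOn_compact (isCompact_uIcc.prod isCompact_uIcc) ?_).congr_fun
      hdivR (measurableSet_uIcc.prod measurableSet_uIcc)
    exact (Continuous.continuousOn (by fun_prop)).mul (hWc.comp (by fun_prop) hRV)
  have hgreen := integral2_divergence_prod_of_hasFDerivAt_off_countable _ _ _ _ 0 (-π) r π ∅
    countable_empty (fun p hp => (hfieldsR p hp).1.continuousAt.continuousWithinAt)
    (fun p hp => (hfieldsR p hp).2.continuousAt.continuousWithinAt)
    (fun p hp => (hfieldsR p (hIoo p hp)).1.hasFDerivAt)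
    (fun p hp => (hfieldsR p (hIoo p hp)).2.hasFDerivAt) hint
  have hangular : ∀ x : ℝ, polarAngularField g (x, π) = polarAngularField g (x, -π) := fun x => by
    simpa [show π - 2 * π = -π by ring] using ((periodic_polarAngularField g x).sub_eq π).symm
  have hradial : ∀ y : ℝ, polarRadialField g (0, y) = 0 := fun y => by
    simp [polarRadialField, circleMap_zero_radius]
  calc ∫ w in ball (0 : ℂ) r, wirtDBar g w
      = ∫ ρ in 0..r, ∫ θ in -π..π, ρ * wirtDBar g (circleMap 0 ρ θ) :=
        setIntegral_ball_eq_polar hr (hWc.mono hrV)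
    _ = ∫ ρ in 0..r, ∫ θ in -π..π, (1 / 2) * (fderiv ℝ (polarRadialField g) (ρ, θ) (1, 0)
          + fderiv ℝ (polarAngularField g) (ρ, θ) (0, 1)) := by
        refine intervalIntegral.integral_congr fun ρ hρ => intervalIntegral.integral_congr
          fun θ hθ => ?_
        simp only [← hdivR (show (ρ, θ) ∈ R from ⟨hρ, hθ⟩)]
        ring
    _ = -(I / 2) * contourDw r g := by
        simp only [intervalIntegral.integral_const_mul]
        rw [hgreen, contourDw_eq_integral_polarRadialField]
        simp only [hangular, hradial, sub_self, intervalIntegral.integral_zero]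
        linear_combination ((1 / 2) * ∫ θ in -π..π, polarRadialField g (r, θ)) * I_sq

theorem integral_ball_wirtD (hr : 0 < r) (hV : IsOpen V) (hrV : closedBall 0 r ⊆ V)
    (hg : ContDiffOn ℝ 1 g V) :
    ∫ w in ball (0 : ℂ) r, wirtD g w = (I / 2) * contourDwBar r g := by
  have hcg : ContDiffOn ℝ 1 (conj ∘ g) V :=
    (conjCLE : ℂ ≃L[ℝ] ℂ).contDiff.comp_contDiffOn hg
  calc ∫ w in ball (0 : ℂ) r, wirtD g w
      = ∫ w in ball (0 : ℂ) r, conj (wirtDBar (conj ∘ g) w) :=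
        setIntegral_congr_fun measurableSet_ball fun w hw => wirtD_eq_conj_wirtDBar_conj
          ((hg.differentiableOn one_ne_zero).differentiableAt
            (hV.mem_nhds (hrV (ball_subset_closedBall hw))))
    _ = _ := by
        rw [integral_conj, integral_ball_wirtDBar hr hV hrV hcg,
          contourDwBar_eq_conj_contourDw_conj]
        simp only [map_mul, map_neg, map_div₀, map_ofNat, conj_I]
        ring

end Stokes

section FibreStokes

variable {U : Set (ℂ × ℂ)} {r : ℝ} {z : ℂ} {F₁ F₂ F₃ : ℂ × ℂ → ℂ}

lemma ContDiffOn.slice_snd {n : WithTop ℕ∞} {F : ℂ × ℂ → ℂ} (hF : ContDiffOn ℝ n F U) (z : ℂ) :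
    ContDiffOn ℝ n (fun w => F (z, w)) {w | (z, w) ∈ U} :=
  hF.comp (contDiffOn_const.prodMk contDiffOn_id) fun _ hw => hw

lemma integral_ball_wirtD2_add_wirtDBar2_sub_wirtDBar2 (hU : IsOpen U) (hr : 0 < r)
    (hzU : ∀ w ∈ closedBall (0 : ℂ) r, (z, w) ∈ U) (h₁ : ContDiffOn ℝ 1 F₁ U)
    (h₂ : ContDiffOn ℝ 1 F₂ U) (h₃ : ContDiffOn ℝ 1 F₃ U) :
    ∫ w in ball (0 : ℂ) r, (wirtD2 F₁ (z, w) + wirtDBar2 F₂ (z, w) - wirtDBar2 F₃ (z, w))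
      = (I / 2) * (contourDwBar r (fun w => F₁ (z, w)) - contourDw r (fun w => F₂ (z, w))
          + contourDw r (fun w => F₃ (z, w))) := by
  have hV : IsOpen {w | (z, w) ∈ U} := hU.preimage (by fun_prop)
  have hint {g : ℂ → ℂ} (hg : ContDiffOn ℝ 1 g {w | (z, w) ∈ U}) :
      IntegrableOn (wirtD g) (ball (0 : ℂ) r) ∧ IntegrableOn (wirtDBar g) (ball (0 : ℂ) r) :=
    ⟨((hg.continuousOn_wirtD hV).mono hzU).integrableOn_ball,
      ((hg.continuousOn_wirtDBar hV).mono hzU).integrableOn_ball⟩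
  change ∫ w in ball (0 : ℂ) r, (wirtD (fun w => F₁ (z, w)) w + wirtDBar (fun w => F₂ (z, w)) w
    - wirtDBar (fun w => F₃ (z, w)) w) = _
  obtain ⟨i₁, -⟩ := hint (h₁.slice_snd z)
  obtain ⟨-, i₂⟩ := hint (h₂.slice_snd z)
  obtain ⟨-, i₃⟩ := hint (h₃.slice_snd z)
  rw [integral_sub _ i₃, integral_add i₁ i₂, integral_ball_wirtD hr hV hzU (h₁.slice_snd z),
    integral_ball_wirtDBar hr hV hzU (h₂.slice_snd z),
    integral_ball_wirtDBar hr hV hzU (h₃.slice_snd z)]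
  · ring
  · exact i₁.add i₂

end FibreStokes

theorem laplacian_of_fiber_area_general (r : ℝ) (hr0 : 0 < r)
    (t11 t12 t21 t22 : ℂ × ℂ → ℂ) (U : Set (ℂ × ℂ)) (hU : IsOpen U)
    (hUsub : closure (Metric.ball (0:ℂ) 1) ×ˢ closure (Metric.ball (0:ℂ) r) ⊆ U)
    (h11 : ContDiffOn ℝ 2 t11 U) (h12 : ContDiffOn ℝ 2 t12 U)
    (h21 : ContDiffOn ℝ 2 t21 U) (h22 : ContDiffOn ℝ 2 t22 U)
    (hpde : ∀ p ∈ U,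
      wirtD1 (fun q => wirtDBar1 t22 q) p + wirtD2 (fun q => wirtDBar2 t11 q) p
        - wirtD2 (fun q => wirtDBar1 t12 q) p - wirtD1 (fun q => wirtDBar2 t21 q) p = 0)
    (a : ℂ → ℂ) (ha : ∀ z₁, a z₁ = ∫ w in Metric.ball (0:ℂ) r, t22 (z₁, w)) :
    ContDiffOn ℝ 2 a (Metric.ball (0:ℂ) 1) ∧
      ∀ z₁ ∈ Metric.ball (0:ℂ) 1,
        wirtD (fun w => wirtDBar a w) z₁
          = (Complex.I / 2) *
              (contourDwBar r (fun w => wirtDBar1 t12 (z₁, w))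
                - contourDw r (fun w => wirtD1 t21 (z₁, w))
                + contourDw r (fun w => wirtD2 t11 (z₁, w))) := by
  have hball : ball (0 : ℂ) 1 ×ˢ closedBall (0 : ℂ) r ⊆ U := by
    rw [closure_ball _ one_ne_zero, closure_ball _ hr0.ne'] at hUsub
    exact (prod_mono ball_subset_closedBall subset_rfl).trans hUsub
  obtain rfl : a = fun z => ∫ w in ball (0 : ℂ) r, t22 (z, w) := funext ha
  refine ⟨by exact_mod_cast contDiffOn_integral_ball 2 isOpen_ball hU hball (by exact_mod_cast h22),
    fun z₁ hz₁ => ?_⟩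
  have hDbar : wirtDBar (fun z => ∫ w in ball (0 : ℂ) r, t22 (z, w))
      =ᶠ[𝓝 z₁] fun z => ∫ w in ball (0 : ℂ) r, wirtDBar1 t22 (z, w) :=
    eventually_of_mem (isOpen_ball.mem_nhds hz₁) fun z hz =>
      wirtDBar_integral_ball isOpen_ball hU hball (h22.of_le one_le_two) hz
  have hfibre : ∀ w ∈ ball (0 : ℂ) r, wirtD1 (wirtDBar1 t22) (z₁, w)
      = wirtD2 (wirtDBar1 t12) (z₁, w) + wirtDBar2 (wirtD1 t21) (z₁, w)
        - wirtDBar2 (wirtD2 t11) (z₁, w) := fun w hw => by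
    have hq : (z₁, w) ∈ U := hball ⟨hz₁, ball_subset_closedBall hw⟩
    rw [← wirtD1_wirtDBar2_comm hU h21 hq, ← wirtD2_wirtDBar2_comm hU h11 hq]
    linear_combination hpde _ hq
  rw [wirtD_congr hDbar, wirtD_integral_ball isOpen_ball hU hball (h22.wirtDBar1 hU) hz₁,
    setIntegral_congr_fun measurableSet_ball hfibre]
  exact integral_ball_wirtD2_add_wirtDBar2_sub_wirtDBar2 hU hr0 (fun w hw => hball ⟨hz₁, hw⟩)
    (h12.wirtDBar1 hU) (h21.wirtD1 hU) (h11.wirtD2 hU)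

/-- Equations (2.2)–(2.3) of the paper: if `t11, t12, t21, t22 : ℂ² → ℂ` are `C²` on an
open neighborhood `U` of `cl(𝔻) × cl(D(0,r))` and satisfy
`∂²t22/∂z₁∂z̄₁ + ∂²t11/∂z₂∂z̄₂ − ∂²t12/∂z₂∂z̄₁ − ∂²t21/∂z₁∂z̄₂ = 0` on `U`, then
`a(z₁) = ∫_{D(0,r)} t22(z₁,·) dλ` is `C²` on `𝔻`, and for every `z₁ ∈ 𝔻`,
`∂²a/∂z₁∂z̄₁ = (i/2)[ ∮_{|w|=r} (∂t12/∂z̄₁) dw̄ − ∮_{|w|=r} (∂t21/∂z₁) dw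
 + ∮_{|w|=r} (∂t11/∂w) dw ]`. -/
theorem laplacian_of_fiber_area (r : ℝ) (hr0 : 0 < r) (hr1 : r < 1)
    (t11 t12 t21 t22 : ℂ × ℂ → ℂ) (U : Set (ℂ × ℂ)) (hU : IsOpen U)
    (hUsub : closure (Metric.ball (0:ℂ) 1) ×ˢ closure (Metric.ball (0:ℂ) r) ⊆ U)
    (h11 : ContDiffOn ℝ 2 t11 U) (h12 : ContDiffOn ℝ 2 t12 U)
    (h21 : ContDiffOn ℝ 2 t21 U) (h22 : ContDiffOn ℝ 2 t22 U)
    (hpde : ∀ p ∈ U,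
      wirtD1 (fun q => wirtDBar1 t22 q) p + wirtD2 (fun q => wirtDBar2 t11 q) p
        - wirtD2 (fun q => wirtDBar1 t12 q) p - wirtD1 (fun q => wirtDBar2 t21 q) p = 0)
    (a : ℂ → ℂ) (ha : ∀ z₁, a z₁ = ∫ w in Metric.ball (0:ℂ) r, t22 (z₁, w)) :
    ContDiffOn ℝ 2 a (Metric.ball (0:ℂ) 1) ∧
      ∀ z₁ ∈ Metric.ball (0:ℂ) 1,
        wirtD (fun w => wirtDBar a w) z₁
          = (Complex.I / 2) *
              (contourDwBar r (fun w => wirtDBar1 t12 (z₁, w))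
                - contourDw r (fun w => wirtD1 t21 (z₁, w))
                + contourDw r (fun w => wirtD2 t11 (z₁, w))) :=
  laplacian_of_fiber_area_general r hr0 t11 t12 t21 t22 U hU hUsub h11 h12 h21 h22 hpde a ha
end
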